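/- arXiv:0705.0167 — 2 statements merged into one kernel-verified Lean document; each statement's English description precedes it below -/
import Mathlib

section
/- Let A, A* be a tridiagonal pair on V with diameter d. Then V = U^{↓↑}_0 + U^{↓↑}_1 + ⋯ + U^{↓↑}_d is a direct sum, where U^{↓↑}_i = (V*_0 + ⋯ + V*_i) ∩ (V_i + ⋯ + V_d) for 0 ≤ i ≤ d. -/
noncomputable section

open Module

/-- The `i`-th eigenspace in an ordering `θ 0, …, θ d` of the eigenvalues of `A`,
with the convention that it is `⊥` for `i > d` (so `V_{d+1} = 0`). -/
def evSp {V : Type*} [AddCommGroup V] [Module ℂ V]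
    (A : Module.End ℂ V) (θ : ℕ → ℂ) (d : ℕ) (i : ℕ) : Submodule ℂ V :=
  if i ≤ d then A.eigenspace (θ i) else ⊥

/-- A tridiagonal pair `A, A*` on `V`: both maps are diagonalizable, there are orderings
`V_0, …, V_d` (with eigenvalues `θ 0, …, θ d`) of the eigenspaces of `A` and
`V*_0, …, V*_δ` (with eigenvalues `ψ 0, …, ψ δ`) of the eigenspaces of `A*`
satisfying the tridiagonal conditions (with `V_{-1} = 0`, `V_{d+1} = 0`,
`V*_{-1} = 0`, `V*_{δ+1} = 0`), and the pair is irreducible. -/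
structure TDPair (V : Type*) [AddCommGroup V] [Module ℂ V] where
  A : Module.End ℂ V
  Astar : Module.End ℂ V
  d : ℕ
  δ : ℕ
  θ : ℕ → ℂ
  ψ : ℕ → ℂ
  θ_inj : ∀ i ≤ d, ∀ j ≤ d, θ i = θ j → i = j
  ψ_inj : ∀ i ≤ δ, ∀ j ≤ δ, ψ i = ψ j → i = j
  eigA_ne : ∀ i ≤ d, A.eigenspace (θ i) ≠ ⊥
  eigAstar_ne : ∀ i ≤ δ, Astar.eigenspace (ψ i) ≠ ⊥
  eigA_all : ∀ μ : ℂ, A.eigenspace μ ≠ ⊥ → ∃ i ≤ d, μ = θ i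
  eigAstar_all : ∀ μ : ℂ, Astar.eigenspace μ ≠ ⊥ → ∃ i ≤ δ, μ = ψ i
  diagA : ⨆ i ∈ Finset.range (d + 1), A.eigenspace (θ i) = ⊤
  diagAstar : ⨆ i ∈ Finset.range (δ + 1), Astar.eigenspace (ψ i) = ⊤
  triA : ∀ i ≤ d, Submodule.map Astar (evSp A θ d i) ≤
      evSp A θ d (i - 1) ⊔ evSp A θ d i ⊔ evSp A θ d (i + 1)
  triAstar : ∀ i ≤ δ, Submodule.map A (evSp Astar ψ δ i) ≤
      evSp Astar ψ δ (i - 1) ⊔ evSp Astar ψ δ i ⊔ evSp Astar ψ δ (i + 1)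
  irred : ∀ W : Submodule ℂ V, Submodule.map A W ≤ W → Submodule.map Astar W ≤ W →
      W = ⊥ ∨ W = ⊤

/-- `U^{↓↓}_i = (V*_0 + ⋯ + V*_i) ∩ (V_0 + ⋯ + V_{d-i})`. -/
def Udd {V : Type*} [AddCommGroup V] [Module ℂ V] (P : TDPair V) (i : ℕ) : Submodule ℂ V :=
  (⨆ k ∈ Finset.range (i + 1), P.Astar.eigenspace (P.ψ k)) ⊓
  (⨆ k ∈ Finset.range (P.d - i + 1), P.A.eigenspace (P.θ k))

/-- `U^{↑↓}_i = (V*_{d-i} + ⋯ + V*_d) ∩ (V_0 + ⋯ + V_{d-i})`. -/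
def Uud {V : Type*} [AddCommGroup V] [Module ℂ V] (P : TDPair V) (i : ℕ) : Submodule ℂ V :=
  (⨆ k ∈ Finset.Icc (P.d - i) P.d, P.Astar.eigenspace (P.ψ k)) ⊓
  (⨆ k ∈ Finset.range (P.d - i + 1), P.A.eigenspace (P.θ k))

/-- `U^{↓↑}_i = (V*_0 + ⋯ + V*_i) ∩ (V_i + ⋯ + V_d)`. -/
def Udu {V : Type*} [AddCommGroup V] [Module ℂ V] (P : TDPair V) (i : ℕ) : Submodule ℂ V :=
  (⨆ k ∈ Finset.range (i + 1), P.Astar.eigenspace (P.ψ k)) ⊓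
  (⨆ k ∈ Finset.Icc i P.d, P.A.eigenspace (P.θ k))

/-- `U^{↑↑}_i = (V*_{d-i} + ⋯ + V*_d) ∩ (V_i + ⋯ + V_d)`. -/
def Uuu {V : Type*} [AddCommGroup V] [Module ℂ V] (P : TDPair V) (i : ℕ) : Submodule ℂ V :=
  (⨆ k ∈ Finset.Icc (P.d - i) P.d, P.Astar.eigenspace (P.ψ k)) ⊓
  (⨆ k ∈ Finset.Icc i P.d, P.A.eigenspace (P.θ k))

/-!
Write `X_i = V*_0 + ⋯ + V*_{i-1}` and `Y_i = V_i + ⋯ + V_d`. The tridiagonal conditions make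
`A - θ_b` map `X_a ∩ Y_b` into `X_{a+1} ∩ Y_{b+1}` and `A* - ψ_{a-1}` map it into
`X_{a-1} ∩ Y_{b-1}`. Hence `∑_j X_j ∩ Y_j` and `∑_j X_{j+1} ∩ Y_j = ∑_j U^{↓↑}_j` are invariant
under `A` and `A*`, so each is `0` or `V`. The first lies in `X_d`, which misses `V*_d ≠ 0`, so
`X_j ∩ Y_j = 0` for all `j`; the second contains `V*_0 ≠ 0`, so it is `V`. Directness is then
modularity: `U^{↓↑}_i ∩ (X_i + Y_{i+1}) = X_{i+1} ∩ (Y_{i+1} + X_i ∩ Y_i) = X_{i+1} ∩ Y_{i+1} = 0`.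
-/

section Eigenspaces

variable {K V : Type*} [Field K] [AddCommGroup V] [Module K V]

theorem Submodule.map_sub_smul_one_le {f : Module.End K V} {p q : Submodule K V} (c : K)
    (hf : p.map f ≤ q) (hp : p ≤ q) : p.map (f - c • 1) ≤ q := by
  rintro _ ⟨v, hv, rfl⟩
  simpa using q.sub_mem (hf ⟨v, hv, rfl⟩) (q.smul_mem c (hp hv))

theorem Submodule.map_le_sup_of_map_sub_smul_one_le {f : Module.End K V} {p q : Submodule K V}
    {c : K} (h : p.map (f - c • 1) ≤ q) : p.map f ≤ q ⊔ p := by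
  rintro _ ⟨v, hv, rfl⟩
  have hfv : f v = (f - c • 1) v + c • v := by simp
  exact hfv ▸ Submodule.add_mem_sup (h ⟨v, hv, rfl⟩) (p.smul_mem c hv)

theorem Module.End.map_sub_smul_one_biSup_eigenspace_le {ι : Type*} [DecidableEq ι]
    (f : Module.End K V) (μ : ι → K) (s : Finset ι) (i : ι) :
    (⨆ k ∈ s, f.eigenspace (μ k)).map (f - μ i • 1) ≤ ⨆ k ∈ s.erase i, f.eigenspace (μ k) := by
  simp only [Submodule.map_iSup]
  refine iSup₂_le fun k hk => ?_
  rintro _ ⟨v, hv, rfl⟩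
  rw [SetLike.mem_coe, Module.End.mem_eigenspace_iff] at hv
  rcases eq_or_ne k i with rfl | hki
  · simp [hv]
  · refine le_iSup₂_of_le (f := fun k (_ : k ∈ s.erase i) => f.eigenspace (μ k)) k
      (Finset.mem_erase.2 ⟨hki, hk⟩) le_rfl ?_
    rw [Module.End.mem_eigenspace_iff]
    simp only [LinearMap.sub_apply, LinearMap.smul_apply, Module.End.one_apply, map_sub, map_smul,
      hv, smul_sub, smul_comm (μ i)]

theorem Module.End.disjoint_eigenspace_biSup_eigenspace {ι : Type*} (f : Module.End K V)
    (μ : ι → K) {s : Finset ι} {i : ι} (h : ∀ k ∈ s, μ k ≠ μ i) :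
    Disjoint (f.eigenspace (μ i)) (⨆ k ∈ s, f.eigenspace (μ k)) := by
  have hi : μ i ∉ μ '' s := fun ⟨k, hk, hki⟩ => h k hk hki
  exact (f.eigenspaces_iSupIndep.disjoint_biSup hi).mono_right
    (iSup₂_le fun k hk => le_iSup₂_of_le (μ k) (Set.mem_image_of_mem μ hk) le_rfl)

end Eigenspaces

theorem iSupIndep_inf_of_monotone_of_antitone {α : Type*} [CompleteLattice α] [IsModularLattice α]
    {X Y : ℕ → α} (hX : Monotone X) (hY : Antitone Y) (hXY : ∀ i, X i ⊓ Y i = ⊥) :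
    iSupIndep fun i => X (i + 1) ⊓ Y i := by
  intro i
  have hle : (⨆ (j) (_ : j ≠ i), X (j + 1) ⊓ Y j) ≤ X i ⊔ Y (i + 1) := iSup₂_le fun j hj => by
    rcases hj.lt_or_gt with h | h
    · exact inf_le_left.trans ((hX h).trans le_sup_left)
    · exact inf_le_right.trans ((hY h).trans le_sup_right)
  refine (disjoint_iff.2 ?_).mono_right hle
  calc X (i + 1) ⊓ Y i ⊓ (X i ⊔ Y (i + 1)) = X (i + 1) ⊓ ((Y (i + 1) ⊔ X i) ⊓ Y i) := by
        rw [sup_comm, inf_assoc, inf_comm (Y i)]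
    _ = X (i + 1) ⊓ Y (i + 1) := by
        rw [sup_inf_assoc_of_le _ (hY i.le_succ), hXY, sup_bot_eq]
    _ = ⊥ := hXY _

theorem evSp_le_eigenspace {V : Type*} [AddCommGroup V] [Module ℂ V] (A : Module.End ℂ V)
    (θ : ℕ → ℂ) (d i : ℕ) : evSp A θ d i ≤ A.eigenspace (θ i) := by
  unfold evSp
  split_ifs
  exacts [le_rfl, bot_le]

theorem evSp_of_le {V : Type*} [AddCommGroup V] [Module ℂ V] (A : Module.End ℂ V)
    (θ : ℕ → ℂ) {d i : ℕ} (h : i ≤ d) : evSp A θ d i = A.eigenspace (θ i) :=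
  if_pos h

namespace TDPair

variable {V : Type*} [AddCommGroup V] [Module ℂ V] (P : TDPair V)

/-- `X_i = V*_0 + ⋯ + V*_{i-1}`. -/
def starPrefix (i : ℕ) : Submodule ℂ V :=
  ⨆ k ∈ Finset.range i, P.Astar.eigenspace (P.ψ k)

/-- `Y_i = V_i + ⋯ + V_d`. -/
def suffix (i : ℕ) : Submodule ℂ V :=
  ⨆ k ∈ Finset.Icc i P.d, P.A.eigenspace (P.θ k)

theorem starPrefix_mono : Monotone P.starPrefix :=
  fun _ _ h => biSup_mono fun _ hk => Finset.range_mono h hk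

theorem suffix_anti : Antitone P.suffix :=
  fun _ _ h => biSup_mono fun _ hk => Finset.Icc_subset_Icc_left h hk

theorem suffix_eq_bot {i : ℕ} (h : P.d < i) : P.suffix i = ⊥ := by
  simp [suffix, Finset.Icc_eq_empty_of_lt h]

theorem suffix_zero : P.suffix 0 = ⊤ := by
  rw [suffix, ← Finset.Ico_add_one_right_eq_Icc, ← Finset.range_eq_Ico]
  exact P.diagA

theorem eigenspace_le_starPrefix {i k : ℕ} (h : k < i) :
    P.Astar.eigenspace (P.ψ k) ≤ P.starPrefix i :=
  le_iSup₂_of_le k (Finset.mem_range.2 h) le_rfl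

theorem eigenspace_le_suffix {i k : ℕ} (h₁ : i ≤ k) (h₂ : k ≤ P.d) :
    P.A.eigenspace (P.θ k) ≤ P.suffix i :=
  le_iSup₂_of_le k (Finset.mem_Icc.2 ⟨h₁, h₂⟩) le_rfl

theorem evSp_le_starPrefix {i j : ℕ} (h : j < i) : evSp P.Astar P.ψ P.δ j ≤ P.starPrefix i :=
  (evSp_le_eigenspace _ _ _ _).trans (P.eigenspace_le_starPrefix h)

theorem evSp_le_suffix {i j : ℕ} (h : i ≤ j) : evSp P.A P.θ P.d j ≤ P.suffix i := by
  unfold evSp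
  split_ifs with hj
  exacts [P.eigenspace_le_suffix h hj, bot_le]

theorem map_A_starPrefix_le {i : ℕ} (hi : i ≤ P.δ + 1) :
    (P.starPrefix i).map P.A ≤ P.starPrefix (i + 1) := by
  rw [starPrefix]
  simp only [Submodule.map_iSup]
  refine iSup₂_le fun k hk => ?_
  have hk : k < i := Finset.mem_range.1 hk
  rw [← evSp_of_le _ _ (by omega : k ≤ P.δ)]
  exact (P.triAstar k (by omega)).trans <| sup_le
    (sup_le (P.evSp_le_starPrefix (by omega)) (P.evSp_le_starPrefix (by omega)))
    (P.evSp_le_starPrefix (by omega))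

theorem map_Astar_suffix_le (i : ℕ) : (P.suffix i).map P.Astar ≤ P.suffix (i - 1) := by
  rw [suffix]
  simp only [Submodule.map_iSup]
  refine iSup₂_le fun k hk => ?_
  have hk := Finset.mem_Icc.1 hk
  rw [← evSp_of_le _ _ hk.2]
  exact (P.triA k hk.2).trans <| sup_le
    (sup_le (P.evSp_le_suffix (by omega)) (P.evSp_le_suffix (by omega)))
    (P.evSp_le_suffix (by omega))

theorem map_Astar_sub_starPrefix_le (i : ℕ) :
    (P.starPrefix i).map (P.Astar - P.ψ (i - 1) • 1) ≤ P.starPrefix (i - 1) := by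
  cases i with
  | zero => simp [starPrefix]
  | succ i =>
    have h := P.Astar.map_sub_smul_one_biSup_eigenspace_le P.ψ (Finset.range (i + 1)) i
    rw [Finset.range_add_one, Finset.erase_insert Finset.notMem_range_self,
      ← Finset.range_add_one] at h
    rw [Nat.add_sub_cancel]
    exact h

theorem map_A_sub_suffix_le (i : ℕ) :
    (P.suffix i).map (P.A - P.θ i • 1) ≤ P.suffix (i + 1) := by
  have h := P.A.map_sub_smul_one_biSup_eigenspace_le P.θ (Finset.Icc i P.d) i
  rwa [Finset.Icc_erase_left, ← Finset.Icc_add_one_left_eq_Ioc] at h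

theorem map_A_sub_inf_le {a : ℕ} (ha : a ≤ P.δ + 1) (b : ℕ) :
    (P.starPrefix a ⊓ P.suffix b).map (P.A - P.θ b • 1) ≤
      P.starPrefix (a + 1) ⊓ P.suffix (b + 1) :=
  (Submodule.map_inf_le _).trans <| inf_le_inf
    (Submodule.map_sub_smul_one_le _ (P.map_A_starPrefix_le ha) (P.starPrefix_mono a.le_succ))
    (P.map_A_sub_suffix_le b)

theorem map_Astar_sub_inf_le (a b : ℕ) :
    (P.starPrefix a ⊓ P.suffix b).map (P.Astar - P.ψ (a - 1) • 1) ≤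
      P.starPrefix (a - 1) ⊓ P.suffix (b - 1) :=
  (Submodule.map_inf_le _).trans <| inf_le_inf (P.map_Astar_sub_starPrefix_le a)
    (Submodule.map_sub_smul_one_le _ (P.map_Astar_suffix_le b) (P.suffix_anti (b.sub_le 1)))

theorem iSup_starPrefix_inf_suffix_eq_bot_or_eq_top (hd : P.d ≤ P.δ) {c : ℕ} (hc : c ≤ 1) :
    (⨆ j, P.starPrefix (j + c) ⊓ P.suffix j) = ⊥ ∨
      (⨆ j, P.starPrefix (j + c) ⊓ P.suffix j) = ⊤ := by
  set F : ℕ → Submodule ℂ V := fun j => P.starPrefix (j + c) ⊓ P.suffix j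
  refine P.irred _ ?_ ?_ <;> rw [Submodule.map_iSup] <;> refine iSup_le fun j => ?_
  · rcases le_or_gt j P.d with hj | hj
    · refine (Submodule.map_le_sup_of_map_sub_smul_one_le
        (P.map_A_sub_inf_le (by omega) j)).trans (sup_le ?_ (le_iSup F j))
      exact le_iSup_of_le (j + 1) (inf_le_inf_right _ (P.starPrefix_mono (by omega)))
    · simp [F, P.suffix_eq_bot hj]
  · refine (Submodule.map_le_sup_of_map_sub_smul_one_le
      (P.map_Astar_sub_inf_le (j + c) j)).trans (sup_le ?_ (le_iSup F j))
    exact le_iSup_of_le (j - 1) (inf_le_inf_right _ (P.starPrefix_mono (by omega)))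

theorem starPrefix_ne_top (hd : P.d ≤ P.δ) : P.starPrefix P.d ≠ ⊤ := by
  intro htop
  have hψ : ∀ k ∈ Finset.range P.d, P.ψ k ≠ P.ψ P.d := fun k hk heq =>
    (Finset.mem_range.1 hk).ne (P.ψ_inj k ((Finset.mem_range.1 hk).le.trans hd) P.d hd heq)
  have hdisj := P.Astar.disjoint_eigenspace_biSup_eigenspace P.ψ hψ
  rw [← starPrefix, htop, disjoint_top] at hdisj
  exact P.eigAstar_ne P.d hd hdisj

theorem starPrefix_inf_suffix_eq_bot (hd : P.d ≤ P.δ) (i : ℕ) :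
    P.starPrefix i ⊓ P.suffix i = ⊥ := by
  have hle : (⨆ j, P.starPrefix (j + 0) ⊓ P.suffix j) ≤ P.starPrefix P.d := iSup_le fun j => by
    rcases le_or_gt j P.d with hj | hj
    · exact inf_le_left.trans (P.starPrefix_mono hj)
    · simp [P.suffix_eq_bot hj]
  rcases P.iSup_starPrefix_inf_suffix_eq_bot_or_eq_top hd zero_le_one with h | h
  · exact le_bot_iff.1 (h ▸ le_iSup (fun j => P.starPrefix (j + 0) ⊓ P.suffix j) i)
  · exact absurd (top_le_iff.1 (h ▸ hle)) (P.starPrefix_ne_top hd)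

theorem iSup_udu_eq_top (hd : P.d ≤ P.δ) : ⨆ j, Udu P j = ⊤ := by
  refine (P.iSup_starPrefix_inf_suffix_eq_bot_or_eq_top hd le_rfl).resolve_left fun h =>
    P.eigAstar_ne 0 (Nat.zero_le _) (le_bot_iff.1 ?_)
  calc P.Astar.eigenspace (P.ψ 0)
      ≤ Udu P 0 :=
        le_inf (P.eigenspace_le_starPrefix zero_lt_one) (le_top.trans_eq P.suffix_zero.symm)
    _ ≤ ⨆ j, Udu P j := le_iSup _ 0
    _ = ⊥ := h

end TDPair

theorem tdpair_split_du_general {V : Type*} [AddCommGroup V] [Module ℂ V]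
    (P : TDPair V)
    (hdd : P.δ = P.d) :
    iSupIndep (fun i : Fin (P.d + 1) => Udu P i) ∧
      (⨆ i : Fin (P.d + 1), Udu P i) = ⊤ := by
  have hd : P.d ≤ P.δ := hdd.ge
  refine ⟨(iSupIndep_inf_of_monotone_of_antitone P.starPrefix_mono P.suffix_anti
    (P.starPrefix_inf_suffix_eq_bot hd)).comp Fin.val_injective, ?_⟩
  refine top_unique ((P.iSup_udu_eq_top hd).ge.trans (iSup_le fun j => ?_))
  rcases le_or_gt j P.d with hj | hj
  · exact le_iSup_of_le ⟨j, Nat.lt_succ_of_le hj⟩ le_rfl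
  · exact (inf_le_right.trans (P.suffix_eq_bot hj).le).trans bot_le

/-- The `(↓,↓)/(↑,↓)/(↓,↑)/(↑,↑)`-split decomposition:
`V = U_0 + U_1 + ⋯ + U_d` is a direct sum. -/
theorem tdpair_split_du {V : Type*} [AddCommGroup V] [Module ℂ V]
    [FiniteDimensional ℂ V] (hV : 0 < Module.finrank ℂ V) (P : TDPair V)
    (hdd : P.δ = P.d) :
    iSupIndep (fun i : Fin (P.d + 1) => Udu P i) ∧
      (⨆ i : Fin (P.d + 1), Udu P i) = ⊤ :=
  tdpair_split_du_general P hdd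

end
end

section
/- With the Q-polynomial distance-regular graph setup and the split subspaces Ṽ^{μν}_{i,j}, for each μ, ν ∈ {↓,↑} one has V = Σ_{i=0}^D Σ_{j=0}^D Ṽ^{μν}_{i,j} as a direct sum (the (μ,ν)-split decomposition of V with respect to x). -/
noncomputable section

open Matrix Finset
open scoped ComplexInnerProductSpace

/-- A `Q`-polynomial distance-regular graph setup: a finite connected simple graph `G` on `X`
with diameter `D ≥ 3`, intersection numbers `p h i j`, primitive idempotents
`E 0, …, E D` of the Bose–Mesner algebra with (distinct, real) eigenvalues `θ 0, …, θ D`,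
and Krein parameters `q h i j` satisfying the `Q`-polynomial condition with respect to the
ordering `E 0, …, E D`. -/
structure QPolyDRG (X : Type*) [Fintype X] [DecidableEq X] where
  G : SimpleGraph X
  conn : G.Connected
  D : ℕ
  hD3 : 3 ≤ D
  dist_le : ∀ y z : X, G.dist y z ≤ D
  dist_eq : ∃ y z : X, G.dist y z = D
  p : ℕ → ℕ → ℕ → ℕ
  hp : ∀ h i j : ℕ, h ≤ D → i ≤ D → j ≤ D → ∀ y z : X, G.dist y z = h →
    Nat.card {w : X // G.dist y w = i ∧ G.dist w z = j} = p h i j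
  E : ℕ → Matrix X X ℂ
  θ : ℕ → ℝ
  q : ℕ → ℕ → ℕ → ℝ
  hE0 : E 0 = ((Fintype.card X : ℂ))⁻¹ • Matrix.of (fun _ _ => (1 : ℂ))
  hEsum : ∑ i ∈ Finset.range (D + 1), E i = 1
  hEmul : ∀ i ≤ D, ∀ j ≤ D, E i * E j = if i = j then E i else 0
  hEsym : ∀ i ≤ D, (E i)ᵀ = E i
  hEreal : ∀ i ≤ D, ∀ y z : X, ((E i) y z).im = 0
  hEinM : ∀ i ≤ D, E i ∈ Submodule.span ℂ
    {B : Matrix X X ℂ | ∃ k ≤ D, B = Matrix.of (fun y z => if G.dist y z = k then (1 : ℂ) else 0)}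
  hAE : ∀ i ≤ D,
    Matrix.of (fun y z => if G.dist y z = 1 then (1 : ℂ) else 0) * E i = (θ i : ℂ) • E i
  θ_inj : ∀ i ≤ D, ∀ j ≤ D, θ i = θ j → i = j
  hKrein : ∀ i ≤ D, ∀ j ≤ D, Matrix.hadamard (E i) (E j) =
    ((Fintype.card X : ℂ))⁻¹ • ∑ h ∈ Finset.range (D + 1), (q h i j : ℂ) • E h
  hq_zero : ∀ h ≤ D, ∀ i ≤ D, ∀ j ≤ D, (i + j < h ∨ h + j < i ∨ h + i < j) → q h i j = 0
  hq_ne : ∀ h ≤ D, ∀ i ≤ D, ∀ j ≤ D, (h = i + j ∨ i = h + j ∨ j = h + i) → q h i j ≠ 0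

namespace QPolyDRG

variable {X : Type*} [Fintype X] [DecidableEq X] (S : QPolyDRG X) (x : X)

/-- The `i`-th distance matrix `A_i`. -/
def Amat (i : ℕ) : Matrix X X ℂ :=
  Matrix.of (fun y z => if S.G.dist y z = i then (1 : ℂ) else 0)

/-- The adjacency matrix `A = A_1`. -/
def adj : Matrix X X ℂ := S.Amat 1

/-- The `i`-th dual idempotent `E*_i = E*_i(x)` with respect to the base vertex `x`. -/
def Estar (i : ℕ) : Matrix X X ℂ :=
  Matrix.diagonal (fun y => if S.G.dist x y = i then (1 : ℂ) else 0)

/-- The dual adjacency matrix `A* = A*(x)`, with `(A*)_{yy} = |X| (E_1)_{xy}`. -/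
def Astar : Matrix X X ℂ :=
  Matrix.diagonal (fun y => (Fintype.card X : ℂ) * S.E 1 x y)

/-- The subspace `E_i V` of the standard module, with the convention that it is `0`
for `i ∉ {0, …, D}`. -/
def EV (i : ℤ) : Submodule ℂ (EuclideanSpace ℂ X) :=
  if 0 ≤ i ∧ i ≤ S.D then LinearMap.range (Matrix.toEuclideanLin (S.E i.toNat)) else ⊥

/-- The `i`-th subconstituent `E*_i V` with respect to `x`, with the convention that it is `0`
for `i ∉ {0, …, D}`. -/
def EstarV (i : ℤ) : Submodule ℂ (EuclideanSpace ℂ X) :=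
  if 0 ≤ i ∧ i ≤ S.D then LinearMap.range (Matrix.toEuclideanLin (S.Estar x i.toNat)) else ⊥

/-- The subconstituent (Terwilliger) algebra `T = T(x)`, generated by `A` and `A*`. -/
def Talg : Subalgebra ℂ (Matrix X X ℂ) := Algebra.adjoin ℂ {S.adj, S.Astar x}

/-- A `T`-module: a subspace `W ⊆ V` with `B W ⊆ W` for all `B ∈ T`. -/
def IsTModule (W : Submodule ℂ (EuclideanSpace ℂ X)) : Prop :=
  ∀ B ∈ S.Talg x, ∀ w ∈ W, Matrix.toEuclideanLin B w ∈ W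

/-- An irreducible `T`-module. -/
def IsIrredTModule (W : Submodule ℂ (EuclideanSpace ℂ X)) : Prop :=
  S.IsTModule x W ∧ W ≠ ⊥ ∧ ∀ W' ≤ W, S.IsTModule x W' → W' = ⊥ ∨ W' = W

/-- The subspace `E_i W`, with the convention that it is `0` for `i ∉ {0, …, D}`. -/
def EW (W : Submodule ℂ (EuclideanSpace ℂ X)) (i : ℤ) : Submodule ℂ (EuclideanSpace ℂ X) :=
  if 0 ≤ i ∧ i ≤ S.D then Submodule.map (Matrix.toEuclideanLin (S.E i.toNat)) W else ⊥

/-- The subspace `E*_i W`, with the convention that it is `0` for `i ∉ {0, …, D}`. -/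
def EstarW (W : Submodule ℂ (EuclideanSpace ℂ X)) (i : ℤ) : Submodule ℂ (EuclideanSpace ℂ X) :=
  if 0 ≤ i ∧ i ≤ S.D then Submodule.map (Matrix.toEuclideanLin (S.Estar x i.toNat)) W else ⊥


/-- The endpoint `ρ = min { i : E*_i W ≠ 0 }` of a `T`-module `W`. -/
def endpt (W : Submodule ℂ (EuclideanSpace ℂ X)) : ℕ :=
  sInf {i : ℕ | i ≤ S.D ∧ S.EstarW x W i ≠ ⊥}

/-- The dual endpoint `τ = min { i : E_i W ≠ 0 }` of a `T`-module `W`. -/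
def dualEndpt (W : Submodule ℂ (EuclideanSpace ℂ X)) : ℕ :=
  sInf {i : ℕ | i ≤ S.D ∧ S.EW W i ≠ ⊥}

/-- The diameter `d = |{ i : E*_i W ≠ 0 }| - 1` of a `T`-module `W`. -/
def diam (W : Submodule ℂ (EuclideanSpace ℂ X)) : ℕ :=
  Set.ncard {i : ℕ | i ≤ S.D ∧ S.EstarW x W i ≠ ⊥} - 1

/-- The dual diameter `|{ i : E_i W ≠ 0 }| - 1` of a `T`-module `W`. -/
def dualDiam (W : Submodule ℂ (EuclideanSpace ℂ X)) : ℕ :=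
  Set.ncard {i : ℕ | i ≤ S.D ∧ S.EW W i ≠ ⊥} - 1

/-- The split subspace `W^{μν}_h` of an irreducible `T`-module `W` with endpoint `ρ`,
dual endpoint `τ` and diameter `d`.  Here `μ = false` stands for `↓` and `μ = true`
for `↑`, and similarly for `ν`; e.g.
`W^{↓↓}_h = (E*_ρ W + ⋯ + E*_{ρ+h} W) ∩ (E_τ W + ⋯ + E_{τ+d-h} W)`. -/
def Wsplit (W : Submodule ℂ (EuclideanSpace ℂ X)) (ρ τ d : ℕ) (μ ν : Bool) (h : ℕ) :
    Submodule ℂ (EuclideanSpace ℂ X) :=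
  (if μ then ⨆ k ∈ Finset.Icc (ρ + d - h) (ρ + d), S.EstarW x W k
    else ⨆ k ∈ Finset.Icc ρ (ρ + h), S.EstarW x W k) ⊓
  (if ν then ⨆ k ∈ Finset.Icc (τ + h) (τ + d), S.EW W k
    else ⨆ k ∈ Finset.Icc τ (τ + d - h), S.EW W k)

/-- The subspace `V^{μν}_{i,j}` (interpreted as `0` if `i = -1` or `j = -1`).
Here `μ = false` stands for `↓` and `μ = true` for `↑`, and similarly for `ν`; e.g.
`V^{↓↓}_{i,j} = (E*_0 V + ⋯ + E*_i V) ∩ (E_0 V + ⋯ + E_j V)` and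
`V^{↑↑}_{i,j} = (E*_D V + ⋯ + E*_{D-i} V) ∩ (E_D V + ⋯ + E_{D-j} V)`. -/
def Vsplit (μ ν : Bool) (i j : ℤ) : Submodule ℂ (EuclideanSpace ℂ X) :=
  if 0 ≤ i ∧ 0 ≤ j then
    (if μ then ⨆ k ∈ Finset.Icc (S.D - i.toNat) S.D, S.EstarV x k
      else ⨆ k ∈ Finset.range (i.toNat + 1), S.EstarV x k) ⊓
    (if ν then ⨆ k ∈ Finset.Icc (S.D - j.toNat) S.D, S.EV k
      else ⨆ k ∈ Finset.range (j.toNat + 1), S.EV k)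
  else ⊥

/-- The subspace `Ṽ^{μν}_{i,j}`: the orthogonal complement of
`V^{μν}_{i-1,j} + V^{μν}_{i,j-1}` in `V^{μν}_{i,j}` with respect to the standard
Hermitian form. -/
def tildeV (μ ν : Bool) (i j : ℕ) : Submodule ℂ (EuclideanSpace ℂ X) :=
  S.Vsplit x μ ν i j ⊓ (S.Vsplit x μ ν ((i : ℤ) - 1) j ⊔ S.Vsplit x μ ν i ((j : ℤ) - 1))ᗮ

end QPolyDRG

/-! The spaces `V^{μν}_{i,j}` are the cells `U i ⊓ W j` of two flags `U, W` ending in `V`,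
made of partial sums of the `E*_k V` and of the `E_k V` (taken from either end). For any two
such flags, `Ṽ_{i,j}` is a complement of `U (i-1) ⊓ W j ⊔ U i ⊓ W (j-1)` in `U i ⊓ W j`; as the
two summands meet in `U (i-1) ⊓ W (j-1)`, `dim Ṽ_{i,j}` is the mixed second difference of
`(i, j) ↦ dim (U i ⊓ W j)`, so these dimensions telescope to `dim V`. Induction on `i + j`
shows that the `Ṽ_{i,j}` span `V`, and a spanning family whose dimensions add up to `dim V`
is independent. -/

theorem Finset.sum_range_sum_range_sub_sub {G : Type*} [AddCommGroup G] (g : ℕ → ℕ → G)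
    (m n : ℕ) :
    ∑ i ∈ range m, ∑ j ∈ range n, (g (i + 1) (j + 1) - g i (j + 1) - g (i + 1) j + g i j) =
      g m n - g 0 n - g m 0 + g 0 0 := by
  have hinner : ∀ i, ∑ j ∈ range n, (g (i + 1) (j + 1) - g i (j + 1) - g (i + 1) j + g i j) =
      (g (i + 1) n - g i n) - (g (i + 1) 0 - g i 0) := fun i => by
    rw [← Finset.sum_range_sub (fun j => g (i + 1) j - g i j)]
    exact Finset.sum_congr rfl fun j _ => by abel
  simp only [hinner, Finset.sum_sub_distrib, Finset.sum_range_sub (fun i => g i n),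
    Finset.sum_range_sub (fun i => g i 0)]
  abel

theorem Submodule.iSup_range_eq_top_of_sum_eq_one {R M ι : Type*} [Semiring R]
    [AddCommMonoid M] [Module R M] (s : Finset ι) (f : ι → Module.End R M)
    (h : ∑ k ∈ s, f k = 1) : ⨆ k ∈ s, LinearMap.range (f k) = ⊤ := by
  refine eq_top_iff.2 fun v _ => ?_
  have hv : ∑ k ∈ s, f k v = v := by rw [← LinearMap.sum_apply, h, Module.End.one_apply]
  exact hv ▸ Submodule.sum_mem_biSup fun k _ => LinearMap.mem_range_self (f k) v

theorem iSupIndep_of_iSup_eq_top_of_sum_finrank_eq {K V ι : Type*} [DivisionRing K]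
    [AddCommGroup V] [Module K V] [FiniteDimensional K V] [Fintype ι] {A : ι → Submodule K V}
    (htop : ⨆ i, A i = ⊤) (hrank : ∑ i, Module.finrank K (A i) = Module.finrank K V) :
    iSupIndep A := by
  classical
  have hsurj : Function.Surjective (DirectSum.coeLinearMap A) := by
    rw [← LinearMap.range_eq_top, DirectSum.range_coeLinearMap, htop]
  have hinj : Function.Injective (DirectSum.coeLinearMap A) :=
    (LinearMap.injective_iff_surjective_of_finrank_eq_finrank
      (by rw [Module.finrank_directSum, hrank])).2 hsurj
  exact ((DirectSum.isInternal_submodule_iff_iSupIndep_and_iSup_eq_top A).1 ⟨hinj, hsurj⟩).1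

theorem Matrix.iSup_range_toEuclideanLin_eq_top {𝕜 n ι : Type*} [RCLike 𝕜] [Fintype n]
    [DecidableEq n] (s : Finset ι) (M : ι → Matrix n n 𝕜) (h : ∑ k ∈ s, M k = 1) :
    ⨆ k ∈ s, LinearMap.range (Matrix.toEuclideanLin (M k)) = ⊤ := by
  refine Submodule.iSup_range_eq_top_of_sum_eq_one s _ ?_
  rw [← map_sum, h]
  exact LinearMap.ext fun v => by simp

namespace Submodule

open Module

variable {𝕜 E : Type*} [RCLike 𝕜] [NormedAddCommGroup E] [InnerProductSpace 𝕜 E]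
  {U W : ℤ → Submodule 𝕜 E}

def flagComplement (U W : ℤ → Submodule 𝕜 E) (i j : ℤ) : Submodule 𝕜 E :=
  U i ⊓ W j ⊓ (U (i - 1) ⊓ W j ⊔ U i ⊓ W (j - 1))ᗮ

theorem flagPredecessors_le (hU : Monotone U) (hW : Monotone W) (i j : ℤ) :
    U (i - 1) ⊓ W j ⊔ U i ⊓ W (j - 1) ≤ U i ⊓ W j :=
  sup_le (inf_le_inf_right _ (hU (by omega))) (inf_le_inf_left _ (hW (by omega)))

theorem flagPredecessors_sup_flagComplement [FiniteDimensional 𝕜 E] (hU : Monotone U)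
    (hW : Monotone W) (i j : ℤ) :
    U (i - 1) ⊓ W j ⊔ U i ⊓ W (j - 1) ⊔ flagComplement U W i j = U i ⊓ W j := by
  rw [flagComplement, inf_comm (U i ⊓ W j)]
  exact sup_orthogonal_inf_of_hasOrthogonalProjection (flagPredecessors_le hU hW i j)

theorem finrank_flagComplement [FiniteDimensional 𝕜 E] (hU : Monotone U) (hW : Monotone W)
    (i j : ℤ) :
    (finrank 𝕜 (flagComplement U W i j) : ℤ) =
      finrank 𝕜 ↥(U i ⊓ W j) - finrank 𝕜 ↥(U (i - 1) ⊓ W j) - finrank 𝕜 ↥(U i ⊓ W (j - 1)) +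
        finrank 𝕜 ↥(U (i - 1) ⊓ W (j - 1)) := by
  have hcompl := finrank_add_inf_finrank_orthogonal (flagPredecessors_le hU hW i j)
  have hsup := finrank_sup_add_finrank_inf_eq (U (i - 1) ⊓ W j) (U i ⊓ W (j - 1))
  rw [inf_inf_inf_comm, inf_eq_left.2 (hU (by omega)), inf_eq_right.2 (hW (by omega))] at hsup
  rw [flagComplement, inf_comm (U i ⊓ W j)]
  omega

theorem sum_finrank_flagComplement [FiniteDimensional 𝕜 E] (hU : Monotone U)
    (hW : Monotone W) (hU₀ : U (-1) = ⊥) (hW₀ : W (-1) = ⊥) (D : ℕ) :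
    ∑ p : Fin (D + 1) × Fin (D + 1), finrank 𝕜 (flagComplement U W p.1 p.2) =
      finrank 𝕜 ↥(U D ⊓ W D) := by
  let f : ℤ → ℤ → ℤ := fun i j => finrank 𝕜 ↥(U i ⊓ W j)
  let g : ℕ → ℕ → ℤ := fun a b => f (a - 1) (b - 1)
  have hterm : ∀ i j : ℕ, (finrank 𝕜 (flagComplement U W i j) : ℤ) =
      g (i + 1) (j + 1) - g i (j + 1) - g (i + 1) j + g i j := fun i j => by
    simp only [g, Nat.cast_add, Nat.cast_one, add_sub_cancel_right]
    exact finrank_flagComplement hU hW i j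
  have hrange : ∑ i ∈ range (D + 1), ∑ j ∈ range (D + 1),
      (finrank 𝕜 (flagComplement U W i j) : ℤ) =
        g (D + 1) (D + 1) - g 0 (D + 1) - g (D + 1) 0 + g 0 0 := by
    rw [← Finset.sum_range_sum_range_sub_sub]
    exact Finset.sum_congr rfl fun i _ => Finset.sum_congr rfl fun j _ => hterm i j
  have hg_left : ∀ b, g 0 b = 0 := fun b => by simp [g, f, hU₀]
  have hg_right : ∀ a, g a 0 = 0 := fun a => by simp [g, f, hW₀]
  have hgD : g (D + 1) (D + 1) = f D D := by
    simp only [g, Nat.cast_add, Nat.cast_one, add_sub_cancel_right]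
  simp only [hg_left, hg_right, hgD, sub_zero, add_zero] at hrange
  zify
  rw [Fintype.sum_prod_type]
  refine Eq.trans ?_ hrange
  rw [← Fin.sum_univ_eq_sum_range (fun i => ∑ j ∈ range (D + 1), _)]
  exact Finset.sum_congr rfl fun i _ => Fin.sum_univ_eq_sum_range
    (fun j => (finrank 𝕜 (flagComplement U W i j) : ℤ)) _

theorem inf_le_iSup_flagComplement [FiniteDimensional 𝕜 E] (hU : Monotone U)
    (hW : Monotone W) (hU₀ : U (-1) = ⊥) (hW₀ : W (-1) = ⊥) {D : ℕ} (i j : ℤ) (hi : i ≤ D)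
    (hj : j ≤ D) :
    U i ⊓ W j ≤ ⨆ p : Fin (D + 1) × Fin (D + 1), flagComplement U W p.1 p.2 := by
  rcases lt_or_ge i 0 with hi₀ | hi₀
  · simp [le_bot_iff.1 (hU₀ ▸ hU (by omega : i ≤ -1))]
  rcases lt_or_ge j 0 with hj₀ | hj₀
  · simp [le_bot_iff.1 (hW₀ ▸ hW (by omega : j ≤ -1))]
  rw [← flagPredecessors_sup_flagComplement hU hW]
  refine sup_le (sup_le (inf_le_iSup_flagComplement hU hW hU₀ hW₀ (i - 1) j (by omega) hj)
    (inf_le_iSup_flagComplement hU hW hU₀ hW₀ i (j - 1) hi (by omega))) ?_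
  lift i to ℕ using hi₀
  lift j to ℕ using hj₀
  exact le_iSup_of_le (⟨i, by omega⟩, ⟨j, by omega⟩) le_rfl
termination_by (i + j + 2).toNat

theorem iSupIndep_and_iSup_flagComplement_eq_top [FiniteDimensional 𝕜 E] (hU : Monotone U)
    (hW : Monotone W) (hU₀ : U (-1) = ⊥) (hW₀ : W (-1) = ⊥) {D : ℕ} (hUD : U D = ⊤)
    (hWD : W D = ⊤) :
    iSupIndep (fun p : Fin (D + 1) × Fin (D + 1) => flagComplement U W p.1 p.2) ∧
      ⨆ p : Fin (D + 1) × Fin (D + 1), flagComplement U W p.1 p.2 = ⊤ := by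
  have htop : ⨆ p : Fin (D + 1) × Fin (D + 1), flagComplement U W p.1 p.2 = ⊤ :=
    top_unique <| by
      simpa [hUD, hWD] using inf_le_iSup_flagComplement hU hW hU₀ hW₀ D D le_rfl le_rfl
  refine ⟨iSupIndep_of_iSup_eq_top_of_sum_finrank_eq htop ?_, htop⟩
  rw [sum_finrank_flagComplement hU hW hU₀ hW₀, hUD, hWD, inf_top_eq, finrank_top]

end Submodule

section FlagSup

variable {α : Type*} [CompleteLattice α]

def flagSup (D : ℕ) (fromTop : Bool) (F : ℕ → α) (i : ℤ) : α :=
  if 0 ≤ i then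
    (if fromTop then ⨆ k ∈ Icc (D - i.toNat) D, F k else ⨆ k ∈ range (i.toNat + 1), F k)
  else ⊥

theorem flagSup_monotone (D : ℕ) (fromTop : Bool) (F : ℕ → α) :
    Monotone (flagSup D fromTop F) := by
  intro i j hij
  by_cases hi : 0 ≤ i
  · rw [flagSup, flagSup, if_pos hi, if_pos (hi.trans hij)]
    cases fromTop <;> simp only [Bool.false_eq_true, ↓reduceIte]
    · exact biSup_mono fun k hk => by simp only [Finset.mem_range] at hk ⊢; omega
    · exact biSup_mono fun k hk => by simp only [Finset.mem_Icc] at hk ⊢; omega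
  · rw [flagSup, if_neg hi]
    exact bot_le

theorem flagSup_neg_one (D : ℕ) (fromTop : Bool) (F : ℕ → α) :
    flagSup D fromTop F (-1) = ⊥ := by
  simp [flagSup]

theorem flagSup_self (D : ℕ) (fromTop : Bool) (F : ℕ → α) :
    flagSup D fromTop F D = ⨆ k ∈ range (D + 1), F k := by
  cases fromTop <;> simp [flagSup, Nat.range_succ_eq_Icc_zero]

end FlagSup

namespace QPolyDRG

variable {X : Type*} [Fintype X] [DecidableEq X] (S : QPolyDRG X) (x : X)

theorem Vsplit_eq_inf_flagSup (μ ν : Bool) (i j : ℤ) :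
    S.Vsplit x μ ν i j =
      flagSup S.D μ (fun k => S.EstarV x k) i ⊓ flagSup S.D ν (fun k => S.EV k) j := by
  unfold Vsplit flagSup
  split_ifs <;> simp_all

theorem tildeV_eq_flagComplement (μ ν : Bool) (i j : ℕ) :
    S.tildeV x μ ν i j = Submodule.flagComplement
      (flagSup S.D μ (fun k => S.EstarV x k)) (flagSup S.D ν (fun k => S.EV k)) i j := by
  simp only [tildeV, Submodule.flagComplement, Vsplit_eq_inf_flagSup]

theorem sum_Estar : ∑ k ∈ range (S.D + 1), S.Estar x k = 1 := by
  ext y z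
  by_cases hyz : y = z
  · subst hyz
    simp [Matrix.sum_apply, Estar, Nat.lt_succ_iff.2 (S.dist_le x y)]
  · simp [Matrix.sum_apply, Estar, hyz]

theorem iSup_EstarV_eq_top : ⨆ k ∈ range (S.D + 1), S.EstarV x k = ⊤ := by
  rw [← Matrix.iSup_range_toEuclideanLin_eq_top _ _ (S.sum_Estar x)]
  refine iSup_congr fun k => iSup_congr fun hk => ?_
  simp [EstarV, Nat.lt_succ_iff.1 (Finset.mem_range.1 hk)]

theorem iSup_EV_eq_top : ⨆ k ∈ range (S.D + 1), S.EV k = ⊤ := by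
  rw [← Matrix.iSup_range_toEuclideanLin_eq_top _ _ S.hEsum]
  refine iSup_congr fun k => iSup_congr fun hk => ?_
  simp [EV, Nat.lt_succ_iff.1 (Finset.mem_range.1 hk)]

end QPolyDRG

open QPolyDRG in
/-- The `(μ,ν)`-split decompositions of the standard module: for each `μ, ν ∈ {↓,↑}`,
`V = Σ_{i=0}^D Σ_{j=0}^D Ṽ^{μν}_{i,j}` is a direct sum
(`μ = false` stands for `↓`, `μ = true` for `↑`, and similarly for `ν`). -/
theorem drg_split_decomposition {X : Type*} [Fintype X] [DecidableEq X]
    (S : QPolyDRG X) (x : X) :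
    ∀ μ ν : Bool,
      iSupIndep (fun p : Fin (S.D + 1) × Fin (S.D + 1) => S.tildeV x μ ν p.1 p.2) ∧
      (⨆ p : Fin (S.D + 1) × Fin (S.D + 1), S.tildeV x μ ν p.1 p.2) = ⊤ := by
  intro μ ν
  simp only [tildeV_eq_flagComplement]
  exact Submodule.iSupIndep_and_iSup_flagComplement_eq_top (flagSup_monotone _ _ _) (flagSup_monotone _ _ _)
    (flagSup_neg_one _ _ _) (flagSup_neg_one _ _ _)
    (by rw [flagSup_self, S.iSup_EstarV_eq_top x]) (by rw [flagSup_self, S.iSup_EV_eq_top])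

end
end
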